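/- arXiv:2206.05610 — 2 statements merged into one kernel-verified Lean document; each statement's English description precedes it below -/
import Mathlib

section
/- For every integer n ≥ 1, the Fourier coefficient a_n = (8/π) ∫_0^{π/4} cos(4nt)/cos(t) dt satisfies a_n = (8/π) ln(1 + √2) - (8√2/π) S_n, where S_n = ∑_{k=1}^{n} (-1)^{k-1} (1/(4k-3) - 1/(4k-1)). -/
open Real

/-- The Fourier cosine coefficients of F(x) = 1/cos(x/4) on [-π, π]. -/
noncomputable def fourierA (n : ℕ) : ℝ :=
  (8 / π) * ∫ t in (0:ℝ)..(π / 4), Real.cos (4 * n * t) / Real.cos t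

/-!
With `a = (4n + 2) t`, the identity
`cos (a + 2t) - cos (a - 2t) = 2 cos t (cos (a + t) - cos (a - t))` cancels the denominator of
`aₙ₊₁ - aₙ`, leaving `(16/π) ∫₀^{π/4} (cos ((4n+3) t) - cos ((4n+1) t)) dt`
`= (8√2/π) (-1)ⁿ⁺¹ (1/(4n+1) - 1/(4n+3))`. Telescoping from
`a₀ = (8/π) ∫₀^{π/4} sec t dt = (8/π) log (1 + √2)` gives the formula.
-/

open intervalIntegral Set

theorem cos_add_two_mul_sub_cos_sub_two_mul (a t : ℝ) :
    cos (a + 2 * t) - cos (a - 2 * t) = 2 * cos t * (cos (a + t) - cos (a - t)) := by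
  simp only [cos_add, cos_sub, sin_two_mul, cos_two_mul]
  ring

theorem cos_pos_of_mem_uIcc {b t : ℝ} (hb : b ∈ Ioo (-(π / 2)) (π / 2)) (ht : t ∈ uIcc 0 b) :
    0 < cos t := by
  have h0 : (0:ℝ) ∈ Ioo (-(π / 2)) (π / 2) := ⟨by linarith [pi_pos], by linarith [pi_pos]⟩
  exact cos_pos_of_mem_Ioo (ordConnected_Ioo.uIcc_subset h0 hb ht)

theorem integral_cos_mul (b : ℝ) {c : ℝ} (hc : c ≠ 0) :
    ∫ t in (0:ℝ)..b, cos (c * t) = sin (c * b) / c := by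
  simp [integral_comp_mul_left (fun t => cos t) hc, div_eq_inv_mul]

theorem hasDerivAt_log_one_add_sin_sub_log_cos {t : ℝ} (ht : cos t ≠ 0) :
    HasDerivAt (fun x => log (1 + sin x) - log (cos x)) (1 / cos t) t := by
  have hsin : 1 + sin t ≠ 0 := by
    intro h
    have : cos t ^ 2 = 0 := by nlinarith [sin_sq_add_cos_sq t]
    exact ht (pow_eq_zero_iff two_ne_zero |>.mp this)
  refine ((((hasDerivAt_sin t).const_add 1).log hsin).sub
    ((hasDerivAt_cos t).log ht)).congr_deriv ?_
  field_simp
  linear_combination cos_sq_add_sin_sq t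

theorem intervalIntegrable_cos_mul_div_cos {b : ℝ} (hb : b ∈ Ioo (-(π / 2)) (π / 2)) (c : ℝ) :
    IntervalIntegrable (fun t => cos (c * t) / cos t) MeasureTheory.volume 0 b :=
  (ContinuousOn.div (by fun_prop) continuousOn_cos fun _ ht =>
    (cos_pos_of_mem_uIcc hb ht).ne').intervalIntegrable

theorem integral_one_div_cos {b : ℝ} (hb : b ∈ Ioo (-(π / 2)) (π / 2)) :
    ∫ t in (0:ℝ)..b, 1 / cos t = log (1 + sin b) - log (cos b) := by
  have hint := intervalIntegrable_cos_mul_div_cos hb 0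
  simp only [zero_mul, cos_zero] at hint
  rw [integral_eq_sub_of_hasDerivAt
    (fun t ht => hasDerivAt_log_one_add_sin_sub_log_cos (cos_pos_of_mem_uIcc hb ht).ne') hint]
  simp

theorem integral_cos_add_four_mul_div_cos_sub {b : ℝ} (hb : b ∈ Ioo (-(π / 2)) (π / 2)) {x : ℝ}
    (hx₁ : x + 1 ≠ 0) (hx₃ : x + 3 ≠ 0) :
    (∫ t in (0:ℝ)..b, cos ((x + 4) * t) / cos t) - ∫ t in (0:ℝ)..b, cos (x * t) / cos t
      = 2 * (sin ((x + 3) * b) / (x + 3) - sin ((x + 1) * b) / (x + 1)) := by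
  have hcos : ∀ c : ℝ, IntervalIntegrable (fun t => cos (c * t)) MeasureTheory.volume 0 b :=
    fun c => Continuous.intervalIntegrable (by fun_prop) _ _
  have hEq : EqOn (fun t => cos ((x + 4) * t) / cos t - cos (x * t) / cos t)
      (fun t => 2 * cos ((x + 3) * t) - 2 * cos ((x + 1) * t)) (uIcc 0 b) := by
    intro t ht
    have key := cos_add_two_mul_sub_cos_sub_two_mul ((x + 2) * t) t
    rw [show (x + 2) * t + 2 * t = (x + 4) * t by ring, show (x + 2) * t - 2 * t = x * t by ring,
      show (x + 2) * t + t = (x + 3) * t by ring, show (x + 2) * t - t = (x + 1) * t by ring] at key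
    simp only [div_sub_div_same, key]
    field_simp [(cos_pos_of_mem_uIcc hb ht).ne']
  rw [← integral_sub (intervalIntegrable_cos_mul_div_cos hb _)
      (intervalIntegrable_cos_mul_div_cos hb _), integral_congr hEq,
    integral_sub ((hcos _).const_mul 2) ((hcos _).const_mul 2), integral_const_mul,
    integral_const_mul, integral_cos_mul _ hx₃, integral_cos_mul _ hx₁]
  ring

theorem sin_four_mul_add_one_mul_pi_div_four (n : ℕ) :
    sin ((4 * n + 1) * (π / 4)) = (-1) ^ n * (√2 / 2) := by
  rw [show (4 * n + 1) * (π / 4) = π / 4 + n * π by ring, sin_add_nat_mul_pi, sin_pi_div_four]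

theorem sin_four_mul_add_three_mul_pi_div_four (n : ℕ) :
    sin ((4 * n + 3) * (π / 4)) = (-1) ^ n * (√2 / 2) := by
  rw [show (4 * n + 3) * (π / 4) = (π - π / 4) + n * π by ring, sin_add_nat_mul_pi, sin_pi_sub,
    sin_pi_div_four]

theorem pi_div_four_mem_Ioo : π / 4 ∈ Ioo (-(π / 2)) (π / 2) :=
  ⟨by linarith [pi_pos], by linarith [pi_pos]⟩

theorem fourierA_zero : fourierA 0 = (8 / π) * log (1 + √2) := by
  simp only [fourierA, Nat.cast_zero, mul_zero, zero_mul, cos_zero]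
  rw [integral_one_div_cos pi_div_four_mem_Ioo, sin_pi_div_four, cos_pi_div_four,
    ← log_div (by positivity) (by positivity)]
  congr 2
  field_simp
  linear_combination -sq_sqrt (zero_le_two (α := ℝ))

theorem fourierA_succ_sub (n : ℕ) :
    fourierA (n + 1) - fourierA n
      = -(8 * √2 / π) * ((-1) ^ n * (1 / (4 * n + 1) - 1 / (4 * n + 3))) := by
  simp only [fourierA, ← mul_sub, Nat.cast_succ, mul_add_one]
  rw [integral_cos_add_four_mul_div_cos_sub pi_div_four_mem_Ioo (by positivity) (by positivity),
    sin_four_mul_add_one_mul_pi_div_four, sin_four_mul_add_three_mul_pi_div_four]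
  field_simp
  ring

theorem fourier_coeff_partial_sum_general (n : ℕ) :
    fourierA n
      = (8 / π) * Real.log (1 + Real.sqrt 2)
        - (8 * Real.sqrt 2 / π)
            * ∑ k ∈ Finset.Icc 1 n,
                (-1 : ℝ) ^ (k - 1) * (1 / (4 * (k : ℝ) - 3) - 1 / (4 * (k : ℝ) - 1)) := by
  induction n with
  | zero => simp [fourierA_zero]
  | succ n ih =>
    rw [← sub_add_cancel (fourierA (n + 1)) (fourierA n), fourierA_succ_sub, ih,
      Finset.sum_Icc_succ_top (Nat.le_add_left 1 n), Nat.add_sub_cancel]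
    push_cast
    ring

/-- For n ≥ 1, aₙ = (8/π) ln(1+√2) - (8√2/π) Sₙ where
Sₙ = ∑_{k=1}^{n} (-1)^{k-1} (1/(4k-3) - 1/(4k-1)). -/
theorem fourier_coeff_partial_sum (n : ℕ) (hn : 1 ≤ n) :
    fourierA n
      = (8 / π) * Real.log (1 + Real.sqrt 2)
        - (8 * Real.sqrt 2 / π)
            * ∑ k ∈ Finset.Icc 1 n,
                (-1 : ℝ) ^ (k - 1) * (1 / (4 * (k : ℝ) - 3) - 1 / (4 * (k : ℝ) - 1)) :=
  fourier_coeff_partial_sum_general n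
end

section
/- π² = 4 ln²(1 + √2) + 8 ∫_{ln(1+√2)}^{∞} arctanh(sech x) dx, where sech x = 1/cosh x and arctanh is the inverse hyperbolic tangent; the improper integral converges. -/
/-!
With `t = exp (-x)` one has `artanh (sech x) = log ((1 + t) / (1 - t)) = log (coth (x / 2)) =: f x`,
and `exp (-f x) = (1 - t) / (1 + t)`. Hence `f` is a decreasing involution of `(0, ∞)`: its graph
is symmetric in the diagonal, which it meets at `a = log (1 + √2)`. The lines `x = a` and `y = a`
cut the region under the graph into the square `[0, a]²` and two mirror images of area
`∫_a^∞ f` each, so `∫_0^∞ f = a² + 2 ∫_a^∞ f`. Integrating `f x = 2 ∑ exp (-(2k+1) x) / (2k+1)`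
termwise gives `∫_0^∞ f = 2 ∑ 1 / (2k+1)² = π² / 4`.
-/

open Real MeasureTheory

/-- The inverse hyperbolic tangent: arctanh y = (1/2) ln((1+y)/(1-y)) for |y| < 1. -/
noncomputable def artanh (y : ℝ) : ℝ := (1 / 2) * Real.log ((1 + y) / (1 - y))

open Set

section SelfInverse

variable {f : ℝ → ℝ} {a : ℝ}

theorem regionBetween_Ioo_eq_preimage_swap (ha : 0 < a) (hfa : f a = a)
    (hsymm : ∀ x > 0, ∀ y > 0, y < f x ↔ x < f y) :
    regionBetween (fun _ ↦ a) f (Ioo 0 a) =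
      Prod.swap ⁻¹' regionBetween (fun _ ↦ 0) f (Ioi a) := by
  ext ⟨x, y⟩
  simp only [regionBetween, mem_ofPred_eq, mem_preimage, Prod.fst_swap, Prod.snd_swap, mem_Ioo,
    mem_Ioi]
  constructor
  · rintro ⟨⟨hx, -⟩, hay, hyf⟩
    exact ⟨hay, hx, (hsymm x hx y (ha.trans hay)).1 hyf⟩
  · rintro ⟨hay, hx, hxf⟩
    have hyf := (hsymm x hx y (ha.trans hay)).2 hxf
    have hxa : x < a := hfa ▸ (hsymm x hx a ha).1 (hay.trans hyf)
    exact ⟨⟨hx, hxa⟩, hay, hyf⟩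

theorem lintegral_Ioo_sub_eq_lintegral_Ioi_of_symm (hf : Measurable f) (ha : 0 < a)
    (hfa : f a = a) (hsymm : ∀ x > 0, ∀ y > 0, y < f x ↔ x < f y) :
    ∫⁻ x in Ioo 0 a, ENNReal.ofReal (f x - a) = ∫⁻ x in Ioi a, ENNReal.ofReal (f x) := by
  have hswap := (Measure.measurePreserving_swap (μ := (volume : Measure ℝ))
    (ν := (volume : Measure ℝ))).measure_preimage
    (measurableSet_regionBetween (measurable_const (a := (0 : ℝ))) hf
      (measurableSet_Ioi (a := a))).nullMeasurableSet
  rw [← regionBetween_Ioo_eq_preimage_swap ha hfa hsymm,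
    volume_regionBetween_eq_lintegral' measurable_const hf measurableSet_Ioo,
    volume_regionBetween_eq_lintegral' measurable_const hf measurableSet_Ioi] at hswap
  simpa using hswap

theorem integral_Ioi_eq_sq_add_two_mul_of_symm (hf : Measurable f)
    (hint : IntegrableOn f (Ioi 0)) (hnonneg : ∀ x > a, 0 ≤ f x) (ha : 0 < a)
    (hfa : f a = a) (hsymm : ∀ x > 0, ∀ y > 0, y < f x ↔ x < f y) :
    ∫ x in Ioi 0, f x = a ^ 2 + 2 * ∫ x in Ioi a, f x := by
  have hint_Ioo : IntegrableOn f (Ioo 0 a) := hint.mono_set Ioo_subset_Ioi_self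
  have hswap : ∫ x in Ioo 0 a, (f x - a) = ∫ x in Ioi a, f x := by
    have hlt : ∀ x ∈ Ioo 0 a, a < f x := fun x hx ↦
      (hsymm x hx.1 a ha).2 (by rw [hfa]; exact hx.2)
    rw [integral_eq_lintegral_of_nonneg_ae, integral_eq_lintegral_of_nonneg_ae,
      lintegral_Ioo_sub_eq_lintegral_Ioi_of_symm hf ha hfa hsymm]
    · exact (ae_restrict_iff' measurableSet_Ioi).2 (.of_forall hnonneg)
    · exact hf.aestronglyMeasurable
    · exact (ae_restrict_iff' measurableSet_Ioo).2
        (.of_forall fun x hx ↦ sub_nonneg.2 (hlt x hx).le)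
    · exact (hf.sub measurable_const).aestronglyMeasurable
  calc ∫ x in Ioi 0, f x = (∫ x in Ioc 0 a, f x) + ∫ x in Ioi a, f x := by
        rw [← Ioc_union_Ioi_eq_Ioi ha.le, setIntegral_union (Ioc_disjoint_Ioi le_rfl)
          measurableSet_Ioi (hint.mono_set Ioc_subset_Ioi_self)
          (hint.mono_set (Ioi_subset_Ioi ha.le))]
    _ = (∫ x in Ioo 0 a, (f x - a)) + a ^ 2 + ∫ x in Ioi a, f x := by
        rw [integral_Ioc_eq_integral_Ioo, integral_sub hint_Ioo (integrableOn_const (by simp)),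
          setIntegral_const, Real.volume_real_Ioo_of_le ha.le]
        simp [sq]
    _ = a ^ 2 + 2 * ∫ x in Ioi a, f x := by rw [hswap]; ring

end SelfInverse

theorem hasSum_one_div_odd_sq :
    HasSum (fun k : ℕ ↦ 1 / (2 * (k : ℝ) + 1) ^ 2) (π ^ 2 / 8) := by
  set F : ℕ → ℝ := fun n ↦ 1 / (n : ℝ) ^ 2
  have heven : HasSum (fun k ↦ F (2 * k)) (π ^ 2 / 24) := by
    rw [show π ^ 2 / 24 = 1 / 4 * (π ^ 2 / 6) by ring]
    refine (hasSum_zeta_two.mul_left (1 / 4)).congr_fun fun k ↦ ?_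
    push_cast [F]; ring
  have hodd : Summable (fun k ↦ F (2 * k + 1)) :=
    hasSum_zeta_two.summable.comp_injective fun m n h ↦ by omega
  have htotal := hasSum_zeta_two.unique (heven.even_add_odd hodd.hasSum)
  convert hodd.hasSum using 1
  · ext k; push_cast [F]; ring
  · linarith

theorem lintegral_ofReal_mul_exp_neg_pow_Ioi {c : ℝ} (hc : 0 ≤ c) {n : ℕ} (hn : n ≠ 0) :
    ∫⁻ x in Ioi 0, ENNReal.ofReal (c * exp (-x) ^ n) = ENNReal.ofReal (c / n) := by
  have hn' : 0 < (n : ℝ) := Nat.cast_pos.2 (Nat.pos_of_ne_zero hn)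
  have hpow : (fun x : ℝ ↦ exp (-x) ^ n) = fun x ↦ exp (-n * x) := by
    ext x; rw [← exp_nat_mul]; ring_nf
  have hint : IntegrableOn (fun x : ℝ ↦ exp (-x) ^ n) (Ioi 0) :=
    hpow ▸ exp_neg_integrableOn_Ioi 0 hn'
  have hval : ∫ x in Ioi 0, exp (-x) ^ n = 1 / n := by
    rw [hpow, integral_exp_mul_Ioi (neg_neg_of_pos hn')]
    field_simp
    simp
  rw [← ofReal_integral_eq_lintegral_ofReal (hint.const_mul c)
    (.of_forall fun x ↦ by positivity), integral_const_mul, hval, mul_one_div]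

-- `log (coth (x / 2))`, written to match `Real.hasSum_log_sub_log_of_abs_lt_one`.
noncomputable def logCothHalf (x : ℝ) : ℝ := log (1 + exp (-x)) - log (1 - exp (-x))

theorem measurable_logCothHalf : Measurable logCothHalf := by
  unfold logCothHalf; fun_prop

theorem artanh_one_div_cosh {x : ℝ} (hx : x ≠ 0) :
    _root_.artanh (1 / cosh x) = logCothHalf x := by
  have ht : exp (-x) ≠ 1 := by simpa using hx
  set t := exp (-x) with ht_def
  have ht0 : 0 < t := exp_pos _
  have hsech : 1 / cosh x = 2 * t / (1 + t ^ 2) := by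
    rw [cosh_eq, ← ht_def, show exp x = t⁻¹ by rw [ht_def, exp_neg, inv_inv]]
    field_simp
  have hratio :
      (1 + 2 * t / (1 + t ^ 2)) / (1 - 2 * t / (1 + t ^ 2)) = ((1 + t) / (1 - t)) ^ 2 := by
    have hnum : 1 + 2 * t / (1 + t ^ 2) = (1 + t) ^ 2 / (1 + t ^ 2) := by field_simp; ring
    have hden : 1 - 2 * t / (1 + t ^ 2) = (1 - t) ^ 2 / (1 + t ^ 2) := by field_simp; ring
    rw [hnum, hden, div_div_div_cancel_right₀ (by positivity), div_pow]
  rw [_root_.artanh, hsech, hratio, log_pow, log_div (by positivity) (sub_ne_zero.2 ht.symm),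
    logCothHalf]
  push_cast
  ring

theorem exp_neg_logCothHalf {x : ℝ} (hx : 0 < x) :
    exp (-logCothHalf x) = (1 - exp (-x)) / (1 + exp (-x)) := by
  have ht : exp (-x) < 1 := exp_lt_one_iff.2 (neg_neg_of_pos hx)
  rw [logCothHalf, neg_sub, exp_sub, exp_log (by linarith), exp_log (by positivity)]

theorem lt_logCothHalf_iff {x : ℝ} (hx : 0 < x) (y : ℝ) :
    y < logCothHalf x ↔ 1 < exp (-x) + exp (-y) + exp (-x) * exp (-y) := by
  rw [← neg_lt_neg_iff, ← Real.exp_lt_exp, exp_neg_logCothHalf hx, div_lt_iff₀ (by positivity)]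
  constructor <;> intro h <;> linarith

theorem lt_logCothHalf_iff_lt_logCothHalf {x y : ℝ} (hx : 0 < x) (hy : 0 < y) :
    y < logCothHalf x ↔ x < logCothHalf y := by
  rw [lt_logCothHalf_iff hx, lt_logCothHalf_iff hy, mul_comm]
  constructor <;> intro h <;> linarith

theorem logCothHalf_pos {x : ℝ} (hx : 0 < x) : 0 < logCothHalf x :=
  (lt_logCothHalf_iff hx 0).2 <| by
    simp only [neg_zero, Real.exp_zero, mul_one]; linarith [exp_pos (-x)]

theorem logCothHalf_log_one_add_sqrt_two :
    logCothHalf (log (1 + √2)) = log (1 + √2) := by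
  have h2 : √2 ^ 2 = 2 := sq_sqrt zero_le_two
  have h1 : 1 < √2 := by nlinarith [sqrt_nonneg 2]
  refine neg_injective (Real.exp_injective ?_)
  rw [exp_neg_logCothHalf (log_pos (by linarith)), Real.exp_neg (log (1 + √2)),
    exp_log (by linarith)]
  field_simp
  nlinarith

theorem hasSum_logCothHalf {x : ℝ} (hx : 0 < x) :
    HasSum (fun k : ℕ ↦ 2 * (1 / (2 * (k : ℝ) + 1)) * exp (-x) ^ (2 * k + 1)) (logCothHalf x) :=
  hasSum_log_sub_log_of_abs_lt_one <| by
    rw [abs_of_pos (exp_pos _)]; exact exp_lt_one_iff.2 (neg_neg_of_pos hx)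

theorem lintegral_logCothHalf :
    ∫⁻ x in Ioi 0, ENNReal.ofReal (logCothHalf x) = ENNReal.ofReal (π ^ 2 / 4) := by
  have hterm_nonneg (k : ℕ) (x : ℝ) :
      0 ≤ 2 * (1 / (2 * (k : ℝ) + 1)) * exp (-x) ^ (2 * k + 1) := by
    positivity
  have hseries : ∀ x ∈ Ioi (0 : ℝ), ENNReal.ofReal (logCothHalf x) =
      ∑' k : ℕ, ENNReal.ofReal (2 * (1 / (2 * (k : ℝ) + 1)) * exp (-x) ^ (2 * k + 1)) :=
    fun x hx ↦ by
      rw [← (hasSum_logCothHalf hx).tsum_eq,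
        ENNReal.ofReal_tsum_of_nonneg (hterm_nonneg · x) (hasSum_logCothHalf hx).summable]
  have hterm (k : ℕ) : ∫⁻ x in Ioi 0,
      ENNReal.ofReal (2 * (1 / (2 * (k : ℝ) + 1)) * exp (-x) ^ (2 * k + 1)) =
      ENNReal.ofReal (2 * (1 / (2 * (k : ℝ) + 1) ^ 2)) := by
    rw [lintegral_ofReal_mul_exp_neg_pow_Ioi (by positivity) (Nat.succ_ne_zero _)]
    congr 1
    push_cast
    field_simp
  have hsum := hasSum_one_div_odd_sq.mul_left 2
  rw [setLIntegral_congr_fun measurableSet_Ioi hseries,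
    lintegral_tsum fun k ↦ (by fun_prop : Measurable _).aemeasurable]
  simp_rw [hterm]
  rw [← ENNReal.ofReal_tsum_of_nonneg (fun k ↦ by positivity) hsum.summable, hsum.tsum_eq]
  congr 1
  ring

theorem integrableOn_logCothHalf : IntegrableOn logCothHalf (Ioi 0) := by
  refine (lintegral_ofReal_ne_top_iff_integrable measurable_logCothHalf.aestronglyMeasurable
    ?_).1 (lintegral_logCothHalf ▸ ENNReal.ofReal_ne_top)
  exact (ae_restrict_iff' measurableSet_Ioi).2 (.of_forall fun x hx ↦ (logCothHalf_pos hx).le)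

theorem integral_logCothHalf : ∫ x in Ioi 0, logCothHalf x = π ^ 2 / 4 := by
  rw [integral_eq_lintegral_of_nonneg_ae, lintegral_logCothHalf,
    ENNReal.toReal_ofReal (by positivity)]
  · exact (ae_restrict_iff' measurableSet_Ioi).2 (.of_forall fun x hx ↦ (logCothHalf_pos hx).le)
  · exact measurable_logCothHalf.aestronglyMeasurable

/-- π² = 4 ln²(1+√2) + 8 ∫_{ln(1+√2)}^∞ arctanh(sech x) dx, where sech x = 1/cosh x;
the improper integral converges. -/
theorem pi_sq_artanh_sech :
    IntegrableOn (fun x : ℝ => _root_.artanh (1 / Real.cosh x))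
      (Set.Ioi (Real.log (1 + Real.sqrt 2))) ∧
    π ^ 2 = 4 * Real.log (1 + Real.sqrt 2) ^ 2
      + 8 * ∫ x in Set.Ioi (Real.log (1 + Real.sqrt 2)),
              _root_.artanh (1 / Real.cosh x) := by
  have ha : 0 < log (1 + √2) := log_pos (by simp)
  have hEq : EqOn logCothHalf (fun x ↦ _root_.artanh (1 / cosh x)) (Ioi (log (1 + √2))) :=
    fun x hx ↦ (artanh_one_div_cosh (ha.trans hx).ne').symm
  refine ⟨(integrableOn_logCothHalf.mono_set (Ioi_subset_Ioi ha.le)).congr_fun hEq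
    measurableSet_Ioi, ?_⟩
  rw [← setIntegral_congr_fun measurableSet_Ioi hEq]
  have h := integral_Ioi_eq_sq_add_two_mul_of_symm measurable_logCothHalf integrableOn_logCothHalf
    (fun x hx ↦ (logCothHalf_pos (ha.trans hx)).le) ha logCothHalf_log_one_add_sqrt_two
    fun x hx y hy ↦ lt_logCothHalf_iff_lt_logCothHalf hx hy
  rw [integral_logCothHalf] at h
  linarith
end
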